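/- arXiv:1812.05142 — 2 statements merged into one kernel-verified Lean document; each statement's English description precedes it below -/
import Mathlib

section
/- Let V_AB = [[A, X], [Xᵀ, B]] be real symmetric positive definite. Then the log-det mutual information satisfies I_M(A:B)_V ≥ ½ Tr[A^{-1} X B^{-1} Xᵀ]; the right-hand side equals ½ ‖A^{-1/2} X B^{-1/2}‖₂², half the squared Frobenius norm. -/
/-!
With `S = B - Xᵀ A⁻¹ X` the Schur complement, `det V = det A · det S`, so `2 I_M = -log det C`
for `C = B^{-1/2} S B^{-1/2}`, while `Tr[A⁻¹ X B⁻¹ Xᵀ] = n - Tr C` with `n` the size of `B`.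
The inequality is therefore `∑ log λᵢ ≤ ∑ (λᵢ - 1)` over the (positive) eigenvalues of `C`,
i.e. `log x ≤ x - 1`.
-/

open Matrix

/-- Real power of a Hermitian (real symmetric) matrix via the spectral decomposition
(junk value `0` on non-Hermitian matrices). -/
noncomputable def rpowMat {ι : Type} [Fintype ι] [DecidableEq ι]
    (M : Matrix ι ι ℝ) (t : ℝ) : Matrix ι ι ℝ :=
  if h : M.IsHermitian then
    (h.eigenvectorUnitary : Matrix ι ι ℝ) *
      Matrix.diagonal (fun i => h.eigenvalues i ^ t) *
      star (h.eigenvectorUnitary : Matrix ι ι ℝ)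
  else 0

open ComplexOrder

namespace Matrix

theorem PosDef.log_det_le_trace_sub_card {ι : Type*} [Fintype ι] [DecidableEq ι]
    {C : Matrix ι ι ℝ} (hC : C.PosDef) : Real.log C.det ≤ C.trace - Fintype.card ι := by
  have hpos := hC.eigenvalues_pos
  have hcard : (Fintype.card ι : ℝ) = ∑ _ : ι, 1 := by simp
  rw [hC.1.det_eq_prod_eigenvalues, hC.1.trace_eq_sum_eigenvalues, hcard, ← Finset.sum_sub_distrib]
  simp only [RCLike.ofReal_real_eq_id, id]
  rw [Real.log_prod fun i _ => (hpos i).ne']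
  exact Finset.sum_le_sum fun i _ => Real.log_le_sub_one_of_pos (hpos i)

theorem PosDef.schur_complement₁₁ {𝕜 m n : Type*} [RCLike 𝕜] [Fintype m] [Fintype n]
    [DecidableEq m] [DecidableEq n] {A : Matrix m m 𝕜} {B : Matrix m n 𝕜} {D : Matrix n n 𝕜}
    (hV : (fromBlocks A B Bᴴ D).PosDef) : (D - Bᴴ * A⁻¹ * B).PosDef := by
  have hA : A.PosDef := hV.submatrix Sum.inl_injective
  have := hA.isUnit.invertible
  have hdet := det_fromBlocks₁₁ A B Bᴴ D
  rw [invOf_eq_nonsing_inv] at hdet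
  refine ((hA.fromBlocks₁₁ B D).mp hV.posSemidef).posDef_iff_det_ne_zero.mpr fun h => ?_
  exact hV.det_pos.ne' (by rw [hdet, h, mul_zero])

theorem trace_mul_mul_mul_transpose_of_symm {R m n : Type*} [CommRing R] [Fintype m] [Fintype n]
    {P : Matrix m m R} {Q : Matrix n n R} (hP : Pᵀ = P) (hQ : Qᵀ = Q) (X : Matrix m n R) :
    trace ((P * X * Q) * (P * X * Q)ᵀ) = trace (P * P * X * (Q * Q) * Xᵀ) := by
  rw [transpose_mul, transpose_mul, hP, hQ, ← Matrix.mul_assoc, ← Matrix.mul_assoc, trace_mul_comm]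
  simp only [Matrix.mul_assoc]

end Matrix

section rpowMat

variable {ι : Type} [Fintype ι] [DecidableEq ι] {M : Matrix ι ι ℝ}

theorem rpowMat_of_isHermitian (h : M.IsHermitian) (t : ℝ) :
    rpowMat M t =
      Unitary.conjStarAlgAut ℝ _ h.eigenvectorUnitary (diagonal fun i => h.eigenvalues i ^ t) :=
  dif_pos h

theorem transpose_rpowMat (M : Matrix ι ι ℝ) (t : ℝ) : (rpowMat M t)ᵀ = rpowMat M t := by
  by_cases h : M.IsHermitian
  · rw [← conjTranspose_eq_transpose_of_trivial, ← star_eq_conjTranspose,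
      rpowMat_of_isHermitian h, ← map_star, star_eq_conjTranspose, diagonal_conjTranspose]
    simp
  · rw [rpowMat, dif_neg h, transpose_zero]

theorem rpowMat_zero (h : M.IsHermitian) : rpowMat M 0 = 1 := by
  simp [rpowMat_of_isHermitian h]

theorem rpowMat_one (h : M.IsHermitian) : rpowMat M 1 = M := by
  conv_rhs => rw [h.spectral_theorem]
  simp [rpowMat_of_isHermitian h]

theorem Matrix.PosDef.rpowMat_mul_rpowMat (hM : M.PosDef) (s t : ℝ) :
    rpowMat M s * rpowMat M t = rpowMat M (s + t) := by
  simp_rw [rpowMat_of_isHermitian hM.1, ← map_mul, diagonal_mul_diagonal,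
    ← Real.rpow_add (hM.eigenvalues_pos _)]

theorem Matrix.PosDef.rpowMat_neg_one (hM : M.PosDef) : rpowMat M (-1) = M⁻¹ := by
  refine (inv_eq_right_inv ?_).symm
  nth_rw 1 [← rpowMat_one hM.1]
  rw [hM.rpowMat_mul_rpowMat, add_neg_cancel, rpowMat_zero hM.1]

theorem Matrix.PosDef.rpowMat_neg_half_mul_self (hM : M.PosDef) :
    rpowMat M (-(1 / 2)) * rpowMat M (-(1 / 2)) = M⁻¹ := by
  rw [hM.rpowMat_mul_rpowMat, ← hM.rpowMat_neg_one]
  norm_num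

theorem Matrix.PosDef.log_det_div_det_le_trace_inv_mul_sub_card {B N : Matrix ι ι ℝ}
    (hB : B.PosDef) (hN : N.PosDef) :
    Real.log (N.det / B.det) ≤ (B⁻¹ * N).trace - Fintype.card ι := by
  set R := rpowMat B (-(1 / 2))
  have hRR : R * R = B⁻¹ := hB.rpowMat_neg_half_mul_self
  have hRstar : star R = R := by
    rw [star_eq_conjTranspose, conjTranspose_eq_transpose_of_trivial, transpose_rpowMat]
  have hRunit : IsUnit R := by
    refine isUnit_of_mul_isUnit_left (y := R) ?_
    rw [hRR]
    exact hB.inv.isUnit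
  have hC : (R * N * R).PosDef := by
    simpa only [hRstar] using hRunit.posDef_star_right_conjugate_iff.mpr hN
  have hdet : (R * N * R).det = N.det / B.det := by
    rw [det_mul, det_mul, mul_right_comm, ← det_mul, hRR, det_nonsing_inv, Ring.inverse_eq_inv',
      div_eq_mul_inv, mul_comm]
  have htrace : (R * N * R).trace = (B⁻¹ * N).trace := by
    rw [trace_mul_comm, ← Matrix.mul_assoc, hRR]
  simpa [hdet, htrace] using hC.log_det_le_trace_sub_card

end rpowMat

theorem Matrix.PosDef.trace_inv_mul_mul_inv_mul_transpose_le_log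
    {m n : Type} [Fintype m] [Fintype n] [DecidableEq m] [DecidableEq n]
    {A : Matrix m m ℝ} {B : Matrix n n ℝ} {X : Matrix m n ℝ} (hV : (fromBlocks A X Xᵀ B).PosDef) :
    (A⁻¹ * X * B⁻¹ * Xᵀ).trace ≤ Real.log (A.det * B.det / (fromBlocks A X Xᵀ B).det) := by
  have hA : A.PosDef := hV.submatrix Sum.inl_injective
  have hB : B.PosDef := hV.submatrix Sum.inr_injective
  set S := B - Xᵀ * A⁻¹ * X
  have hS : S.PosDef := hV.schur_complement₁₁
  have := hA.isUnit.invertible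
  have hdet : (fromBlocks A X Xᵀ B).det = A.det * S.det := by
    rw [det_fromBlocks₁₁, invOf_eq_nonsing_inv]
  have hratio : A.det * B.det / (fromBlocks A X Xᵀ B).det = (S.det / B.det)⁻¹ := by
    rw [hdet]
    field_simp [hA.det_pos.ne']
  have htrace : (B⁻¹ * S).trace = Fintype.card n - (A⁻¹ * X * B⁻¹ * Xᵀ).trace := by
    rw [Matrix.mul_sub, trace_sub, nonsing_inv_mul _ hB.det_pos.ne'.isUnit, trace_one,
      Matrix.mul_assoc Xᵀ, ← Matrix.mul_assoc, trace_mul_comm, ← Matrix.mul_assoc]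
  have hlog := hB.log_det_div_det_le_trace_inv_mul_sub_card hS
  rw [htrace] at hlog
  rw [hratio, Real.log_inv]
  linarith

/-- **Quadratic lower bound on the log-det mutual information.** For a positive definite
`V_AB = [[A, X], [Xᵀ, B]]`, `I_M(A:B)_V ≥ ½ Tr[A⁻¹ X B⁻¹ Xᵀ]`, and the right-hand side
equals `½ ‖A^{-1/2} X B^{-1/2}‖₂²`, half the squared Frobenius norm. -/
theorem IM_ge_half_trace (a b : ℕ)
    (A : Matrix (Fin a) (Fin a) ℝ) (B : Matrix (Fin b) (Fin b) ℝ)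
    (X : Matrix (Fin a) (Fin b) ℝ)
    (hV : (fromBlocks A X Xᵀ B).PosDef) :
    (1 / 2 : ℝ) * Real.log ((A.det * B.det) / (fromBlocks A X Xᵀ B).det)
        ≥ (1 / 2 : ℝ) * Matrix.trace (A⁻¹ * X * B⁻¹ * Xᵀ)
      ∧ Matrix.trace (A⁻¹ * X * B⁻¹ * Xᵀ)
        = Matrix.trace ((rpowMat A (-(1 / 2)) * X * rpowMat B (-(1 / 2))) *
            (rpowMat A (-(1 / 2)) * X * rpowMat B (-(1 / 2)))ᵀ) := by
  have hA : A.PosDef := hV.submatrix Sum.inl_injective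
  have hB : B.PosDef := hV.submatrix Sum.inr_injective
  refine ⟨by linarith [hV.trace_inv_mul_mul_inv_mul_transpose_le_log], ?_⟩
  rw [trace_mul_mul_mul_transpose_of_symm (transpose_rpowMat _ _) (transpose_rpowMat _ _),
    hA.rpowMat_neg_half_mul_self, hB.rpowMat_neg_half_mul_self]
end

section
/- Let V_AB = [[V_A, X], [Xᵀ, V_B]] be a bipartite quantum covariance matrix (real symmetric with blocks of sizes 2n_A and 2n_B, and V_AB + iΩ_AB positive semidefinite). If det V_A = 1, i.e. the reduction V_A is a pure QCM, then the off-diagonal block vanishes: X = 0, so V_AB = V_A ⊕ V_B. -/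
/-!
Write `P = V_A + iΩ` and `Q = V_A - iΩ`; `Q` is positive semidefinite because it is the entrywise
conjugate of the Hermitian matrix `P`. Congruence by `W = V_A^{-1/2}` turns `P` and `Q` into
`1 ± H` with `H = i W Ω W` Hermitian, so the eigenvalues of `H` lie in `[-1, 1]`. Purity gives
`|det H| = 1`, which forces them all to be `±1`, i.e. `H² = 1`; unwinding, `Ω V_A⁻¹ Ω = -V_A`
(a pure QCM is symplectic), which says exactly that `P V_A⁻¹ Q = 0 = Q V_A⁻¹ P`.
Positivity of the full matrix makes `Xᵀ` vanish on the kernels of `P` and `Q`, hence on the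
ranges of `V_A⁻¹ Q` and `V_A⁻¹ P`, which add up to twice the identity.
-/

open Matrix ComplexOrder

/-- The standard symplectic form on `k` modes: the `2k × 2k` block-diagonal matrix
`⊕_{i=1}^k [[0, 1], [−1, 0]]`. -/
noncomputable def Omega (k : ℕ) : Matrix (Fin 2 × Fin k) (Fin 2 × Fin k) ℝ :=
  Matrix.blockDiagonal fun _ : Fin k => !![(0 : ℝ), 1; -1, 0]

/-- `V` is a quantum covariance matrix with respect to the symplectic form `Ω`:
the complex Hermitian matrix `V + iΩ` is positive semidefinite. -/
def IsQCM {ι : Type} [Fintype ι] [DecidableEq ι] (Ω V : Matrix ι ι ℝ) : Prop :=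
  (V.map (fun x => (x : ℂ)) + Complex.I • Ω.map (fun x => (x : ℂ))).PosSemidef

namespace Matrix

variable {m p q 𝕜 : Type*} [Fintype m] [Fintype p] [Fintype q] [RCLike 𝕜]

theorem PosSemidef.conjTranspose_mul_eq_zero_of_mul_eq_zero {A : Matrix m m 𝕜}
    {B : Matrix m p 𝕜} {D : Matrix p p 𝕜} {C : Matrix m q 𝕜}
    (hM : (fromBlocks A B Bᴴ D).PosSemidef) (hAC : A * C = 0) : Bᴴ * C = 0 := by
  refine ext_iff_mulVec.2 fun v => ?_
  have hx : A *ᵥ (C *ᵥ v) = 0 := by rw [mulVec_mulVec, hAC, zero_mulVec]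
  have hMx : fromBlocks A B Bᴴ D *ᵥ Sum.elim (C *ᵥ v) 0 =
      Sum.elim (0 : m → 𝕜) (Bᴴ *ᵥ (C *ᵥ v)) := by
    simp [fromBlocks_mulVec, hx]
  have h0 := (hM.dotProduct_mulVec_zero_iff (Sum.elim (C *ᵥ v) 0)).1
    (by simp [hMx, dotProduct, Fintype.sum_sum_type])
  rw [hMx] at h0
  simpa [mulVec_mulVec] using congrArg (· ∘ Sum.inr) h0

variable [DecidableEq m]

theorem IsHermitian.abs_eigenvalues_le_one {H : Matrix m m 𝕜} (hH : H.IsHermitian)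
    (hlo : (1 + H).PosSemidef) (hhi : (1 - H).PosSemidef) (i : m) :
    |hH.eigenvalues i| ≤ 1 := by
  set u : m → 𝕜 := ⇑(hH.eigenvectorBasis i)
  have hu : RCLike.re (star u ⬝ᵥ u) = 1 := by
    rw [dotProduct_comm, ← EuclideanSpace.inner_eq_star_dotProduct, inner_self_eq_norm_sq_to_K,
      hH.eigenvectorBasis.orthonormal.1 i]
    simp
  have hlo' := hlo.re_dotProduct_nonneg u
  have hhi' := hhi.re_dotProduct_nonneg u
  rw [add_mulVec, one_mulVec, dotProduct_add, map_add, hu, ← hH.eigenvalues_eq] at hlo'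
  rw [sub_mulVec, one_mulVec, dotProduct_sub, map_sub, hu, ← hH.eigenvalues_eq] at hhi'
  exact abs_le.2 ⟨by linarith, by linarith⟩

theorem mul_self_eq_one_of_norm_det_eq_one {H : Matrix m m 𝕜}
    (hlo : (1 + H).PosSemidef) (hhi : (1 - H).PosSemidef) (hdet : ‖H.det‖ = 1) :
    H * H = 1 := by
  have hH : H.IsHermitian := by simpa using hlo.isHermitian.sub isHermitian_one
  have hle : ∀ i, ‖hH.eigenvalues i‖₊ ≤ 1 := fun i => by
    rw [← NNReal.coe_le_coe, coe_nnnorm, Real.norm_eq_abs]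
    exact hH.abs_eigenvalues_le_one hlo hhi i
  have hprod : ∏ i, ‖hH.eigenvalues i‖₊ = 1 := by
    rw [← nnnorm_prod, ← NNReal.coe_eq_one]
    rw [hH.det_eq_prod_eigenvalues] at hdet
    simpa using hdet
  have hsq : ∀ i, hH.eigenvalues i * hH.eigenvalues i = 1 := fun i => by
    have h1 :=
      (Finset.prod_eq_one_iff_of_le_one' (fun i _ => hle i)).1 hprod i (Finset.mem_univ i)
    have h2 : |hH.eigenvalues i| = 1 := by
      rw [← Real.norm_eq_abs, ← coe_nnnorm, h1, NNReal.coe_one]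
    rw [← abs_mul_abs_self, h2, one_mul]
  have hD : diagonal (RCLike.ofReal ∘ hH.eigenvalues) * diagonal (RCLike.ofReal ∘ hH.eigenvalues)
      = (1 : Matrix m m 𝕜) := by
    rw [diagonal_mul_diagonal, ← diagonal_one]
    congr 1
    ext i
    simp only [Function.comp_apply, ← RCLike.ofReal_mul, hsq, RCLike.ofReal_one]
  rw [hH.spectral_theorem, ← map_mul, hD, map_one]

open scoped MatrixOrder in
theorem PosSemidef.exists_conjTranspose_mul_mul_eq_one {V : Matrix m m 𝕜} (hV : V.PosSemidef)
    (hdet : IsUnit V.det) : ∃ W : Matrix m m 𝕜, Wᴴ * V * W = 1 ∧ W * Wᴴ = V⁻¹ := by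
  have hWH : (CFC.sqrt V⁻¹)ᴴ = CFC.sqrt V⁻¹ := (CFC.sqrt_nonneg V⁻¹).posSemidef.isHermitian
  have hWW : CFC.sqrt V⁻¹ * CFC.sqrt V⁻¹ = V⁻¹ := CFC.sqrt_mul_sqrt_self _ hV.inv.nonneg
  refine ⟨CFC.sqrt V⁻¹, ?_, by rw [hWH, hWW]⟩
  rw [hWH, mul_eq_one_comm, ← mul_assoc, hWW, nonsing_inv_mul _ hdet]

theorem norm_det_eq_one_of_mul_self_eq_neg_one {O : Matrix m m 𝕜} (hO : O * O = -1) :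
    ‖O.det‖ = 1 := by
  have h := congrArg (‖det ·‖) hO
  simp only [det_mul, norm_mul, det_neg, det_one, norm_pow, norm_neg, norm_one, one_pow,
    mul_one] at h
  nlinarith [norm_nonneg O.det]

theorem mul_inv_mul_eq_neg_of_det_eq_one {V O : Matrix m m ℂ} (hO : O * O = -1)
    (hP : (V + Complex.I • O).PosSemidef) (hQ : (V - Complex.I • O).PosSemidef)
    (hdet : V.det = 1) : O * V⁻¹ * O = -V := by
  have hV : V.PosSemidef := by
    have h := (hP.add hQ).smul (show (0 : ℝ) ≤ 2⁻¹ by norm_num)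
    rwa [add_add_sub_cancel, ← two_smul ℝ, smul_smul, inv_mul_cancel₀ two_ne_zero,
      one_smul] at h
  have hVunit : IsUnit V.det := by simp [hdet]
  obtain ⟨W, hWVW, hWW⟩ := hV.exists_conjTranspose_mul_mul_eq_one hVunit
  set K := Wᴴ * O * W
  have hplus : 1 + Complex.I • K = Wᴴ * (V + Complex.I • O) * W := by
    rw [← hWVW, mul_add, add_mul, mul_smul_comm, smul_mul_assoc]
  have hminus : 1 - Complex.I • K = Wᴴ * (V - Complex.I • O) * W := by
    rw [← hWVW, mul_sub, sub_mul, mul_smul_comm, smul_mul_assoc]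
  have hdetW : ‖W.det‖ * ‖W.det‖ = 1 := by
    simpa [det_mul, hdet] using congrArg (‖det ·‖) hWVW
  have hdetK : ‖(Complex.I • K).det‖ = 1 := by
    simp only [K, det_smul, det_mul, det_conjTranspose, norm_mul, norm_pow, Complex.norm_I,
      one_pow, one_mul, norm_star, norm_det_eq_one_of_mul_self_eq_neg_one hO]
    simpa [mul_comm] using hdetW
  have hKK : K * K = -1 := by
    have h := mul_self_eq_one_of_norm_det_eq_one (hplus ▸ hP.conjTranspose_mul_mul_same W)
      (hminus ▸ hQ.conjTranspose_mul_mul_same W) hdetK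
    rwa [smul_mul_smul, Complex.I_mul_I, neg_one_smul, neg_eq_iff_eq_neg] at h
  have hWW' : ∀ M, W * (Wᴴ * M) = V⁻¹ * M := fun M => by rw [← mul_assoc, hWW]
  have hVV : V * V⁻¹ = 1 := mul_nonsing_inv V hVunit
  calc O * V⁻¹ * O = V * W * (K * K) * (Wᴴ * V) := by
        simp only [K, mul_assoc, hWW']
        simp only [← mul_assoc, hVV, one_mul, nonsing_inv_mul _ hVunit, mul_one]
    _ = -V := by
        rw [hKK, mul_neg_one, neg_mul, mul_assoc, hWW', nonsing_inv_mul _ hVunit, mul_one]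

theorem add_smul_mul_inv_mul_sub_smul_eq_zero {V O : Matrix m m ℂ} (hO : O * O = -1)
    (hP : (V + Complex.I • O).PosSemidef) (hQ : (V - Complex.I • O).PosSemidef)
    (hdet : V.det = 1) : (V + Complex.I • O) * (V⁻¹ * (V - Complex.I • O)) = 0 := by
  have hVunit : IsUnit V.det := by simp [hdet]
  have hOVO := mul_inv_mul_eq_neg_of_det_eq_one hO hP hQ hdet
  rw [mul_assoc] at hOVO
  rw [mul_sub, nonsing_inv_mul _ hVunit, mul_smul_comm, mul_sub, mul_one, add_mul,
    mul_smul_comm, mul_nonsing_inv_cancel_left _ _ hVunit, smul_mul_smul, hOVO, Complex.I_mul_I,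
    neg_one_smul, neg_neg]
  abel

theorem eq_zero_of_posSemidef_fromBlocks {V O : Matrix m m ℂ} {B : Matrix m p ℂ}
    {D D' : Matrix p p ℂ} (hO : O * O = -1) (hdet : V.det = 1)
    (hM : (fromBlocks (V + Complex.I • O) B Bᴴ D).PosSemidef)
    (hM' : (fromBlocks (V - Complex.I • O) B Bᴴ D').PosSemidef) : B = 0 := by
  have hP : (V + Complex.I • O).PosSemidef := hM.submatrix Sum.inl
  have hQ : (V - Complex.I • O).PosSemidef := hM'.submatrix Sum.inl
  -- with `-O` in place of `O` the roles of the two diagonal blocks swap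
  have hQ' : (V + Complex.I • -O).PosSemidef := by rwa [smul_neg, ← sub_eq_add_neg]
  have hP' : (V - Complex.I • -O).PosSemidef := by rwa [smul_neg, sub_neg_eq_add]
  have hPlus := hM.conjTranspose_mul_eq_zero_of_mul_eq_zero
    (add_smul_mul_inv_mul_sub_smul_eq_zero hO hP hQ hdet)
  have hMinus := hM'.conjTranspose_mul_eq_zero_of_mul_eq_zero
    (by simpa [smul_neg, ← sub_eq_add_neg] using
      add_smul_mul_inv_mul_sub_smul_eq_zero (by rwa [neg_mul_neg]) hQ' hP' hdet)
  have hVunit : IsUnit V.det := by simp [hdet]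
  have hsum : V⁻¹ * (V - Complex.I • O) + V⁻¹ * (V + Complex.I • O) =
      (2 : ℂ) • (1 : Matrix m m ℂ) := by
    rw [← mul_add, sub_add_add_cancel, ← two_smul ℂ V, mul_smul_comm, nonsing_inv_mul _ hVunit]
  have h2 : (2 : ℂ) • Bᴴ = 0 :=
    calc (2 : ℂ) • Bᴴ = Bᴴ * ((2 : ℂ) • (1 : Matrix m m ℂ)) := by
          rw [Matrix.mul_smul, Matrix.mul_one]
      _ = 0 := by rw [← hsum, Matrix.mul_add, hPlus, hMinus, add_zero]
  exact conjTranspose_eq_zero.1 ((smul_eq_zero.1 h2).resolve_left two_ne_zero)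

end Matrix

theorem omega_mul_self (k : ℕ) : Omega k * Omega k = -1 := by
  have h : !![(0 : ℝ), 1; -1, 0] * !![(0 : ℝ), 1; -1, 0] = -1 := by
    ext i j; fin_cases i <;> fin_cases j <;> simp
  rw [Omega, ← blockDiagonal_mul, h]
  exact (blockDiagonal_neg 1).trans (congrArg Neg.neg blockDiagonal_one)

namespace IsQCM

variable {ι : Type} [Fintype ι] [DecidableEq ι]

theorem neg {Ω V : Matrix ι ι ℝ} (h : IsQCM Ω V) : IsQCM (-Ω) V := by
  have hT := h.transpose
  rw [← h.isHermitian.eq] at hT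
  refine (congrArg PosSemidef ?_).mpr hT
  ext i j
  simp

theorem posSemidef_fromBlocks {ι' : Type} [Fintype ι'] [DecidableEq ι']
    {ΩA VA : Matrix ι ι ℝ} {ΩB VB : Matrix ι' ι' ℝ} {X : Matrix ι ι' ℝ}
    (h : IsQCM (fromBlocks ΩA 0 0 ΩB) (fromBlocks VA X Xᵀ VB)) :
    (fromBlocks (VA.map (↑) + Complex.I • ΩA.map (↑)) (X.map (↑)) (X.map (↑))ᴴ
      (VB.map (↑) + Complex.I • ΩB.map (↑)) : Matrix (ι ⊕ ι') (ι ⊕ ι') ℂ).PosSemidef := by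
  unfold IsQCM at h
  convert h using 1
  ext (i | i) (j | j) <;> simp

end IsQCM

theorem pure_reduction_factorises_general (nA nB : ℕ)
    (VA : Matrix (Fin 2 × Fin nA) (Fin 2 × Fin nA) ℝ)
    (VB : Matrix (Fin 2 × Fin nB) (Fin 2 × Fin nB) ℝ)
    (X : Matrix (Fin 2 × Fin nA) (Fin 2 × Fin nB) ℝ)
    (hQCM : IsQCM (fromBlocks (Omega nA) 0 0 (Omega nB)) (fromBlocks VA X Xᵀ VB))
    (hpure : VA.det = 1) :
    X = 0 := by
  have hΩ : (Omega nA).map (↑) * (Omega nA).map (↑) = (-1 : Matrix _ _ ℂ) := by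
    have h := congrArg Complex.ofRealHom.mapMatrix (omega_mul_self nA)
    rwa [map_mul, map_neg, map_one] at h
  have hdet : (VA.map ((↑) : ℝ → ℂ)).det = 1 := by
    have h := (Complex.ofRealHom.map_det VA).symm
    rwa [hpure, map_one] at h
  have hneg : IsQCM (fromBlocks (-Omega nA) 0 0 (-Omega nB)) (fromBlocks VA X Xᵀ VB) := by
    simpa [fromBlocks_neg] using hQCM.neg
  have hX := eq_zero_of_posSemidef_fromBlocks hΩ hdet hQCM.posSemidef_fromBlocks
    (by simpa [sub_eq_add_neg, Matrix.map_neg _ Complex.ofReal_neg] using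
      hneg.posSemidef_fromBlocks)
  exact map_injective Complex.ofReal_injective
    (hX.trans (Matrix.map_zero _ Complex.ofReal_zero).symm)

/-- **A pure reduction factorises a bipartite quantum covariance matrix.** If
`V_AB = [[V_A, X], [Xᵀ, V_B]]` is a bipartite QCM and the reduction `V_A` is pure
(`det V_A = 1`), then the off-diagonal block vanishes: `X = 0`. -/
theorem pure_reduction_factorises (nA nB : ℕ)
    (VA : Matrix (Fin 2 × Fin nA) (Fin 2 × Fin nA) ℝ)
    (VB : Matrix (Fin 2 × Fin nB) (Fin 2 × Fin nB) ℝ)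
    (X : Matrix (Fin 2 × Fin nA) (Fin 2 × Fin nB) ℝ)
    (hSym : (fromBlocks VA X Xᵀ VB).IsSymm)
    (hQCM : IsQCM (fromBlocks (Omega nA) 0 0 (Omega nB)) (fromBlocks VA X Xᵀ VB))
    (hpure : VA.det = 1) :
    X = 0 :=
  pure_reduction_factorises_general nA nB VA VB X hQCM hpure
end
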